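/- Let 𝔸 = (A, ≤, →, Σ) be an implicative algebra with |A| < κ for a strongly inaccessible cardinal κ, and let W, ∈_W, =_W be as defined below. Then there exists s₂ ∈ Σ such that s₂ ≤ ⨅_{α,β,γ∈W} (((α =_W β) × (α ∈_W γ)) → (β ∈_W γ)). -/

import Mathlib

universe u

/-- An implicative algebra `𝔸 = (A, ≤, →, Σ)`:  a complete lattice `(A, ≤)` together with an
implication `imp` which is antitone in its first argument, monotone in its second argument and
turns infima in the second argument into infima, and a separator `Sig ⊆ A` which is upward
closed, closed under modus ponens and contains the combinators `K` and `S`. -/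
structure ImplicativeAlgebra (A : Type u) [CompleteLattice A] where
  imp : A → A → A
  imp_antitone : ∀ ⦃a a' b : A⦄, a ≤ a' → imp a' b ≤ imp a b
  imp_monotone : ∀ ⦃a b b' : A⦄, b ≤ b' → imp a b ≤ imp a b'
  imp_sInf : ∀ (a : A) (S : Set A), imp a (sInf S) = ⨅ b ∈ S, imp a b
  Sig : Set A
  Sig_upward : ∀ ⦃a b : A⦄, a ∈ Sig → a ≤ b → b ∈ Sig
  Sig_mp : ∀ ⦃a b : A⦄, imp a b ∈ Sig → a ∈ Sig → b ∈ Sig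
  Sig_K : (⨅ a : A, ⨅ b : A, imp a (imp b a)) ∈ Sig
  Sig_S : (⨅ a : A, ⨅ b : A, ⨅ c : A,
      imp (imp a (imp b c)) (imp (imp a b) (imp a c))) ∈ Sig

namespace ImplicativeAlgebra

variable {A : Type u} [CompleteLattice A]

/-- `a × b := ⨅ x, ((a → (b → x)) → x)`. -/
def times (IA : ImplicativeAlgebra A) (a b : A) : A :=
  ⨅ x : A, IA.imp (IA.imp a (IA.imp b x)) x

/-- `a + b := ⨅ x, ((a → x) → ((b → x) → x))`. -/
def plus (IA : ImplicativeAlgebra A) (a b : A) : A :=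
  ⨅ x : A, IA.imp (IA.imp a x) (IA.imp (IA.imp b x) x)

/-- `∃⃗_{i} f i := ⨅ x, ((⨅ i, (f i → x)) → x)`.  (`∀⃗` is just `⨅`.) -/
def aex (IA : ImplicativeAlgebra A) {ι : Sort*} (f : ι → A) : A :=
  ⨅ x : A, IA.imp (⨅ i, IA.imp (f i) x) x

/-- `φ ⊢_{Σ[I]} ψ` iff `⨅ i, (φ i → ψ i) ∈ Σ`. -/
def SigLe (IA : ImplicativeAlgebra A) {ι : Sort*} (f g : ι → A) : Prop :=
  (⨅ i, IA.imp (f i) (g i)) ∈ IA.Sig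

/-- `φ ≡_{Σ[I]} ψ` iff `φ ⊢_{Σ[I]} ψ` and `ψ ⊢_{Σ[I]} φ`. -/
def SigEquiv (IA : ImplicativeAlgebra A) {ι : Sort*} (f g : ι → A) : Prop :=
  IA.SigLe f g ∧ IA.SigLe g f

end ImplicativeAlgebra

/-- Pre-elements of the cumulative hierarchy of partial functions valued in `A`:
an element is an `A`-labelled family of previously constructed elements, i.e. a partial
function (presented by a family indexed by its domain) from earlier elements to `A`. -/
inductive PreW (A : Type u) : Type (u + 1)
  | mk (ι : Type u) (fam : ι → PreW A) (val : ι → A)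

namespace PreW

variable {A : Type u}

/-- The (index type of the) domain of a partial function. -/
def dom : PreW A → Type u
  | ⟨ι, _, _⟩ => ι

/-- The family of elements of the domain. -/
def fam : (w : PreW A) → w.dom → PreW A
  | ⟨_, f, _⟩ => f

/-- The values in `A` of the partial function. -/
def val : (w : PreW A) → w.dom → A
  | ⟨_, _, v⟩ => v

/-- `w` is hereditarily of size `< κ`:  this carves out exactly the elements of the stage
`W_κ` of the hierarchy (for `κ` inaccessible). -/
def HSmall (κ : Cardinal.{u}) : PreW A → Prop
  | ⟨ι, f, _⟩ => Cardinal.mk ι < κ ∧ ∀ i, HSmall κ (f i)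

theorem HSmall.fam {κ : Cardinal.{u}} :
    ∀ {w : PreW A}, w.HSmall κ → ∀ i : w.dom, (w.fam i).HSmall κ
  | ⟨_, _, _⟩, h, i => h.2 i

/-- The rank of an element of the hierarchy. -/
noncomputable def rank : PreW A → Ordinal.{u}
  | ⟨_, f, _⟩ => ⨆ i, Order.succ (rank (f i))

theorem rank_lt_mk {ι : Type u} (f : ι → PreW A) (v : ι → A) (i : ι) :
    (f i).rank < (PreW.mk ι f v).rank := by
  have h : Order.succ (f i).rank ≤ ⨆ j, Order.succ (f j).rank := Ordinal.le_iSup _ i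
  have : (f i).rank < ⨆ j, Order.succ (f j).rank :=
    lt_of_lt_of_le (Order.lt_succ _) h
  simpa [rank] using this

end PreW

namespace ImplicativeAlgebra

variable {A : Type u} [CompleteLattice A]

/-- `α =_W β`, defined by recursion on rank:
`α =_W β := (α ⊆_W β) × (β ⊆_W α)` where
`α ⊆_W β := ∀⃗_{t ∈ dom α} (α t → (fam α t ∈_W β))` and
`γ ∈_W β := ∃⃗_{s ∈ dom β} (β s × (fam β s =_W γ))`. -/
noncomputable def eqW (IA : ImplicativeAlgebra A) : PreW A → PreW A → A
  | ⟨ι₁, f₁, v₁⟩, ⟨ι₂, f₂, v₂⟩ =>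
    IA.times
      (⨅ t : ι₁, IA.imp (v₁ t)
        (IA.aex fun s : ι₂ => IA.times (v₂ s) (IA.eqW (f₂ s) (f₁ t))))
      (⨅ t : ι₂, IA.imp (v₂ t)
        (IA.aex fun s : ι₁ => IA.times (v₁ s) (IA.eqW (f₁ s) (f₂ t))))
termination_by α β => max α.rank β.rank
decreasing_by
  · exact max_lt (lt_of_lt_of_le (PreW.rank_lt_mk f₂ v₂ s) (le_max_right _ _))
      (lt_of_lt_of_le (PreW.rank_lt_mk f₁ v₁ t) (le_max_left _ _))
  · exact max_lt (lt_of_lt_of_le (PreW.rank_lt_mk f₁ v₁ s) (le_max_left _ _))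
      (lt_of_lt_of_le (PreW.rank_lt_mk f₂ v₂ t) (le_max_right _ _))

/-- `α ∈_W β := ∃⃗_{s ∈ dom β} (β s × (fam β s =_W α))`. -/
noncomputable def memW (IA : ImplicativeAlgebra A) (α β : PreW A) : A :=
  IA.aex fun s : β.dom => IA.times (β.val s) (IA.eqW (β.fam s) α)

/-- `α ⊆_W β := ∀⃗_{t ∈ dom α} (α t → (fam α t ∈_W β))`. -/
noncomputable def subW (IA : ImplicativeAlgebra A) (α β : PreW A) : A :=
  ⨅ t : α.dom, IA.imp (α.val t) (IA.memW (α.fam t) β)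

end ImplicativeAlgebra

/-- The stage `W = W_κ` of the hierarchy: all hereditarily `< κ`-sized elements. -/
def WSet (A : Type u) (κ : Cardinal.{u}) : Type (u + 1) :=
  {w : PreW A // w.HSmall κ}

/-- An element of the domain of `w ∈ W`, as an element of `W`. -/
def WSet.fam {A : Type u} {κ : Cardinal.{u}} (w : WSet A κ) (i : w.1.dom) : WSet A κ :=
  ⟨w.1.fam i, w.2.fam i⟩

/-- Formulas (in context of length `n`) of the first-order language of set theory, with
(de Bruijn-style) variables `Fin n`, binary predicates `∈` and `=`, connectives `⊥`, `∧`, `∨`,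
`→` and quantifiers `∃`, `∀` (binding the last variable of the enlarged context). -/
inductive SetFormula : ℕ → Type
  | bot {n : ℕ} : SetFormula n
  | mem {n : ℕ} (i j : Fin n) : SetFormula n
  | eq {n : ℕ} (i j : Fin n) : SetFormula n
  | and {n : ℕ} (φ ψ : SetFormula n) : SetFormula n
  | or {n : ℕ} (φ ψ : SetFormula n) : SetFormula n
  | imp {n : ℕ} (φ ψ : SetFormula n) : SetFormula n
  | ex {n : ℕ} (φ : SetFormula (n + 1)) : SetFormula n
  | all {n : ℕ} (φ : SetFormula (n + 1)) : SetFormula n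

namespace SetFormula

/-- Renaming of variables (since the only terms of the language of set theory are variables,
substitution is a special case). -/
def rename : {n m : ℕ} → (Fin n → Fin m) → SetFormula n → SetFormula m
  | _, _, _, .bot => .bot
  | _, _, f, .mem i j => .mem (f i) (f j)
  | _, _, f, .eq i j => .eq (f i) (f j)
  | _, _, f, .and φ ψ => .and (φ.rename f) (ψ.rename f)
  | _, _, f, .or φ ψ => .or (φ.rename f) (ψ.rename f)
  | _, _, f, .imp φ ψ => .imp (φ.rename f) (ψ.rename f)
  | _, _, f, .ex φ => .ex (φ.rename (Fin.snoc (Fin.castSucc ∘ f) (Fin.last _)))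
  | _, _, f, .all φ => .all (φ.rename (Fin.snoc (Fin.castSucc ∘ f) (Fin.last _)))

/-- Universal closure `∀x₁ … ∀xₙ φ` of a formula in context of length `n`. -/
def allClose : {n : ℕ} → SetFormula n → SetFormula 0
  | 0, φ => φ
  | _ + 1, φ => allClose (.all φ)

end SetFormula

namespace ImplicativeAlgebra

variable {A : Type u} [CompleteLattice A]

/-- The interpretation `‖φ[x₁,…,xₙ]‖ : Wⁿ → A` of a formula in context, by recursion on the
structure of `φ`:  atomic formulas are interpreted by `∈_W` and `=_W`, `∧` by `×`, `∨` by `+`,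
`→` by `→`, `∃` by `∃⃗` over `W` and `∀` by `∀⃗` (i.e. `⨅`) over `W`. -/
noncomputable def interp (IA : ImplicativeAlgebra A) (κ : Cardinal.{u}) :
    {n : ℕ} → SetFormula n → (Fin n → WSet A κ) → A
  | _, .bot, _ => ⊥
  | _, .mem i j, v => IA.memW (v i).1 (v j).1
  | _, .eq i j, v => IA.eqW (v i).1 (v j).1
  | _, .and φ ψ, v => IA.times (IA.interp κ φ v) (IA.interp κ ψ v)
  | _, .or φ ψ, v => IA.plus (IA.interp κ φ v) (IA.interp κ ψ v)
  | _, .imp φ ψ, v => IA.imp (IA.interp κ φ v) (IA.interp κ ψ v)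
  | _, .ex φ, v => IA.aex fun β : WSet A κ => IA.interp κ φ (Fin.snoc v β)
  | _, .all φ, v => ⨅ β : WSet A κ, IA.interp κ φ (Fin.snoc v β)

end ImplicativeAlgebra

/-! Realizers are written as λ-terms with parameters in `Σ`; such terms denote elements of `Σ` by
combinatory completeness (bracket abstraction into `S` and `K`). Unfolding `=_W` into two
inclusions, a realizer of transitivity of `=_W` through `β` is obtained uniformly from one of
transitivity through every element of `dom β`. Turing's fixed-point combinator applied to this
step therefore realizes transitivity through every `β`, by well-founded induction on the rank of
`β`, and substitutivity of `=_W` in `∈_W` follows from transitivity. -/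

theorem PreW.rank_fam_lt {A : Type u} (w : PreW A) (i : w.dom) : (w.fam i).rank < w.rank := by
  cases w
  exact PreW.rank_lt_mk _ _ i

namespace ImplicativeAlgebra

variable {A : Type u} [CompleteLattice A] (IA : ImplicativeAlgebra A)

noncomputable def app (a b : A) : A :=
  sInf {c | a ≤ IA.imp b c}

noncomputable def lam (f : A → A) : A :=
  ⨅ a, IA.imp a (f a)

noncomputable def kComb : A :=
  ⨅ a : A, ⨅ b : A, IA.imp a (IA.imp b a)

noncomputable def sComb : A :=
  ⨅ a : A, ⨅ b : A, ⨅ c : A, IA.imp (IA.imp a (IA.imp b c)) (IA.imp (IA.imp a b) (IA.imp a c))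

variable {IA}

theorem app_le_iff {a b c : A} : IA.app a b ≤ c ↔ a ≤ IA.imp b c := by
  refine ⟨fun h => ?_, fun h => sInf_le h⟩
  have hle : a ≤ IA.imp b (IA.app a b) := by
    rw [app, IA.imp_sInf]
    exact le_iInf₂ fun c hc => hc
  exact hle.trans (IA.imp_monotone h)

theorem le_imp_app (a b : A) : a ≤ IA.imp b (IA.app a b) :=
  app_le_iff.1 le_rfl

theorem app_le {f x a b : A} (hf : f ≤ IA.imp a b) (hx : x ≤ a) : IA.app f x ≤ b :=
  app_le_iff.2 (hf.trans (IA.imp_antitone hx))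

theorem app_mono {a a' b b' : A} (ha : a ≤ a') (hb : b ≤ b') : IA.app a b ≤ IA.app a' b' :=
  app_le (ha.trans (le_imp_app a' b')) hb

theorem app_mem {a b : A} (ha : a ∈ IA.Sig) (hb : b ∈ IA.Sig) : IA.app a b ∈ IA.Sig :=
  IA.Sig_mp (IA.Sig_upward ha (le_imp_app a b)) hb

theorem lam_le_imp {f : A → A} {a b : A} (h : f a ≤ b) : IA.lam f ≤ IA.imp a b :=
  (iInf_le _ a).trans (IA.imp_monotone h)

theorem app_lam_le (f : A → A) (a : A) : IA.app (IA.lam f) a ≤ f a :=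
  app_le (lam_le_imp le_rfl) le_rfl

theorem times_le_imp (a b x : A) : IA.times a b ≤ IA.imp (IA.imp a (IA.imp b x)) x :=
  iInf_le _ x

theorem aex_le_imp {ι : Sort*} (f : ι → A) (x : A) :
    IA.aex f ≤ IA.imp (⨅ i, IA.imp (f i) x) x :=
  iInf_le _ x

theorem app_app_kComb_le (a b : A) : IA.app (IA.app IA.kComb a) b ≤ a :=
  app_le (app_le (iInf_le_of_le a (iInf_le _ b)) le_rfl) le_rfl

theorem app_app_app_sComb_le (f g x : A) :
    IA.app (IA.app (IA.app IA.sComb f) g) x ≤ IA.app (IA.app f x) (IA.app g x) := by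
  have hs : IA.sComb ≤ IA.imp (IA.imp x (IA.imp (IA.app g x) (IA.app (IA.app f x) (IA.app g x))))
      (IA.imp (IA.imp x (IA.app g x)) (IA.imp x (IA.app (IA.app f x) (IA.app g x)))) :=
    iInf_le_of_le x (iInf_le_of_le _ (iInf_le _ _))
  have hf : f ≤ IA.imp x (IA.imp (IA.app g x) (IA.app (IA.app f x) (IA.app g x))) :=
    (le_imp_app f x).trans (IA.imp_monotone (le_imp_app _ _))
  exact app_le (app_le (app_le hs hf) (le_imp_app g x)) le_rfl

end ImplicativeAlgebra

namespace ImplicativeAlgebra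

inductive CombTerm (A : Type u) : Type u
  | var : ℕ → CombTerm A
  | k : CombTerm A
  | s : CombTerm A
  | const : A → CombTerm A
  | app : CombTerm A → CombTerm A → CombTerm A

namespace CombTerm

variable {A : Type u}

/-- Bracket abstraction of the de Bruijn variable `0`. -/
def abstract : CombTerm A → CombTerm A
  | var 0 => app (app s k) k
  | var (n + 1) => app k (var n)
  | app t u => app (app s t.abstract) u.abstract
  | t => app k t

def WellFormed (S : Set A) : ℕ → CombTerm A → Prop
  | n, var m => m < n
  | _, k => True
  | _, s => True
  | _, const a => a ∈ S
  | n, app t u => t.WellFormed S n ∧ u.WellFormed S n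

theorem WellFormed.abstract {S : Set A} {n : ℕ} :
    ∀ {t : CombTerm A}, t.WellFormed S (n + 1) → t.abstract.WellFormed S n
  | var 0, _ => ⟨⟨trivial, trivial⟩, trivial⟩
  | var (_ + 1), h => ⟨trivial, Nat.lt_of_succ_lt_succ h⟩
  | k, _ => ⟨trivial, trivial⟩
  | s, _ => ⟨trivial, trivial⟩
  | const _, h => ⟨trivial, h⟩
  | app _ _, h => ⟨⟨trivial, h.1.abstract⟩, h.2.abstract⟩

variable [CompleteLattice A]

noncomputable def eval (IA : ImplicativeAlgebra A) : CombTerm A → List A → A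
  | var n, e => e.getD n ⊥
  | k, _ => IA.kComb
  | s, _ => IA.sComb
  | const a, _ => a
  | app t u, e => IA.app (t.eval IA e) (u.eval IA e)

theorem app_eval_abstract_le (IA : ImplicativeAlgebra A) (t : CombTerm A) (e : List A) (a : A) :
    IA.app (t.abstract.eval IA e) a ≤ t.eval IA (a :: e) := by
  induction t with
  | var n =>
    cases n with
    | zero => exact (app_app_app_sComb_le _ _ _).trans (app_app_kComb_le _ _)
    | succ n => exact app_app_kComb_le _ _
  | k | s | const b => exact app_app_kComb_le _ _
  | app t u iht ihu => exact (app_app_app_sComb_le _ _ _).trans (app_mono iht ihu)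

theorem eval_mem {IA : ImplicativeAlgebra A} :
    ∀ {t : CombTerm A}, t.WellFormed IA.Sig 0 → ∀ e : List A, t.eval IA e ∈ IA.Sig
  | var n, h, _ => absurd h (Nat.not_lt_zero n)
  | k, _, _ => IA.Sig_K
  | s, _, _ => IA.Sig_S
  | const _, h, _ => h
  | app _ _, h, e => app_mem (eval_mem h.1 e) (eval_mem h.2 e)

end CombTerm

inductive LamTerm (A : Type u) : Type u
  | var : ℕ → LamTerm A
  | const : A → LamTerm A
  | app : LamTerm A → LamTerm A → LamTerm A
  | lam : LamTerm A → LamTerm A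

namespace LamTerm

variable {A : Type u}

def compile : LamTerm A → CombTerm A
  | var n => .var n
  | const a => .const a
  | app t u => .app t.compile u.compile
  | lam t => t.compile.abstract

def WellFormed (S : Set A) : ℕ → LamTerm A → Prop
  | n, var m => m < n
  | _, const a => a ∈ S
  | n, app t u => t.WellFormed S n ∧ u.WellFormed S n
  | n, lam t => t.WellFormed S (n + 1)

theorem WellFormed.compile {S : Set A} :
    ∀ {n : ℕ} {t : LamTerm A}, t.WellFormed S n → t.compile.WellFormed S n
  | _, var _, h => h
  | _, const _, h => h
  | _, app _ _, h => ⟨h.1.compile, h.2.compile⟩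
  | _, lam t, h => (WellFormed.compile (t := t) h).abstract

variable [CompleteLattice A]

noncomputable def eval (IA : ImplicativeAlgebra A) : LamTerm A → List A → A
  | var n, e => e.getD n ⊥
  | const a, _ => a
  | app t u, e => IA.app (t.eval IA e) (u.eval IA e)
  | lam t, e => IA.lam fun a => t.eval IA (a :: e)

theorem eval_compile_le (IA : ImplicativeAlgebra A) :
    ∀ (t : LamTerm A) (e : List A), t.compile.eval IA e ≤ t.eval IA e
  | var _, _ => le_rfl
  | const _, _ => le_rfl
  | app t u, e => app_mono (eval_compile_le IA t e) (eval_compile_le IA u e)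
  | lam t, e => le_iInf fun a => app_le_iff.1 <|
      (CombTerm.app_eval_abstract_le IA _ e a).trans (eval_compile_le IA t (a :: e))

theorem eval_mem {IA : ImplicativeAlgebra A} {t : LamTerm A} (h : t.WellFormed IA.Sig 0) :
    t.eval IA [] ∈ IA.Sig :=
  IA.Sig_upward (CombTerm.eval_mem h.compile []) (eval_compile_le IA t [])

end LamTerm

variable {A : Type u} [CompleteLattice A] {IA : ImplicativeAlgebra A}

/- Each realizer below is written with the semantic `lam` and `app`; its `_mem` lemma exhibits a
de Bruijn λ-term whose `eval` is that realizer by definitional unfolding. -/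

noncomputable def pair (IA : ImplicativeAlgebra A) : A :=
  IA.lam fun u => IA.lam fun v => IA.lam fun z => IA.app (IA.app z u) v

theorem pair_mem : IA.pair ∈ IA.Sig :=
  LamTerm.eval_mem (t := .lam (.lam (.lam (.app (.app (.var 0) (.var 2)) (.var 1)))))
    (by simp [LamTerm.WellFormed])

theorem pair_le_imp (a b : A) : IA.pair ≤ IA.imp a (IA.imp b (IA.times a b)) :=
  lam_le_imp <| lam_le_imp <| le_iInf fun _ => lam_le_imp <| app_le (app_le le_rfl le_rfl) le_rfl

noncomputable def aexIntro (IA : ImplicativeAlgebra A) : A :=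
  IA.lam fun u => IA.lam fun w => IA.lam fun k => IA.app k (IA.app (IA.app IA.pair u) w)

theorem aexIntro_mem : IA.aexIntro ∈ IA.Sig :=
  LamTerm.eval_mem
    (t := .lam (.lam (.lam (.app (.var 0) (.app (.app (.const IA.pair) (.var 2)) (.var 1))))))
    (by simpa [LamTerm.WellFormed] using pair_mem)

theorem aexIntro_le_imp {ι : Sort*} (f g : ι → A) (i : ι) :
    IA.aexIntro ≤ IA.imp (f i) (IA.imp (g i) (IA.aex fun j => IA.times (f j) (g j))) :=
  lam_le_imp <| lam_le_imp <| le_iInf fun _ => lam_le_imp <|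
    app_le (iInf_le _ i) (app_le (app_le (pair_le_imp _ _) le_rfl) le_rfl)

theorem eqW_eq_times_subW (a b : PreW A) : IA.eqW a b = IA.times (IA.subW a b) (IA.subW b a) := by
  cases a
  cases b
  rw [eqW]
  rfl

theorem subW_le_imp (a b : PreW A) (s : a.dom) :
    IA.subW a b ≤ IA.imp (a.val s) (IA.memW (a.fam s) b) :=
  iInf_le _ s

noncomputable def eqWTrans (IA : ImplicativeAlgebra A) (a b c : PreW A) : A :=
  IA.imp (IA.eqW a b) (IA.imp (IA.eqW b c) (IA.eqW a c))

noncomputable def eqWTransAt (IA : ImplicativeAlgebra A) (b : PreW A) : A :=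
  ⨅ (a : PreW A) (c : PreW A), IA.eqWTrans a b c

theorem eqWTransAt_le (a b c : PreW A) : IA.eqWTransAt b ≤ IA.eqWTrans a b c :=
  iInf_le_of_le a (iInf_le _ c)

noncomputable def memCongr (IA : ImplicativeAlgebra A) : A :=
  IA.lam fun r => IA.lam fun m => IA.lam fun e => IA.app m <| IA.lam fun q => IA.app q <|
    IA.lam fun u => IA.lam fun e' => IA.app (IA.app IA.aexIntro u) (IA.app (IA.app r e') e)

theorem memCongr_mem : IA.memCongr ∈ IA.Sig :=
  LamTerm.eval_mem
    (t := .lam (.lam (.lam (.app (.var 1) (.lam (.app (.var 0) (.lam (.lam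
      (.app (.app (.const IA.aexIntro) (.var 1)) (.app (.app (.var 5) (.var 0)) (.var 3)))))))))))
    (by simpa [LamTerm.WellFormed] using aexIntro_mem)

theorem memCongr_le_imp (x y γ : PreW A) :
    IA.memCongr ≤ IA.imp (⨅ v, IA.eqWTrans (γ.fam v) x y)
      (IA.imp (IA.memW x γ) (IA.imp (IA.eqW x y) (IA.memW y γ))) :=
  lam_le_imp <| lam_le_imp <| lam_le_imp <| app_le (aex_le_imp _ _) <| le_iInf fun v =>
    lam_le_imp <| app_le (times_le_imp _ _ _) <| lam_le_imp <| lam_le_imp <|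
      app_le (app_le (aexIntro_le_imp _ _ v) le_rfl)
        (app_le (app_le (iInf_le _ v) le_rfl) le_rfl)

noncomputable def subTrans (IA : ImplicativeAlgebra A) : A :=
  IA.lam fun r => IA.lam fun ab => IA.lam fun bc => IA.lam fun w =>
    IA.app (IA.app ab w) <| IA.lam fun p => IA.app p <| IA.lam fun bu => IA.lam fun e =>
      IA.app (IA.app (IA.app IA.memCongr r) (IA.app bc bu)) e

theorem subTrans_mem : IA.subTrans ∈ IA.Sig :=
  LamTerm.eval_mem
    (t := .lam (.lam (.lam (.lam (.app (.app (.var 2) (.var 0)) (.lam (.app (.var 0) (.lam (.lam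
      (.app (.app (.app (.const IA.memCongr) (.var 6)) (.app (.var 4) (.var 1))) (.var 0)))))))))))
    (by simpa [LamTerm.WellFormed] using memCongr_mem)

theorem subTrans_le_imp (a b c : PreW A) :
    IA.subTrans ≤ IA.imp (⨅ u, IA.eqWTransAt (b.fam u))
      (IA.imp (IA.subW a b) (IA.imp (IA.subW b c) (IA.subW a c))) :=
  lam_le_imp <| lam_le_imp <| lam_le_imp <| le_iInf fun s => lam_le_imp <|
    app_le ((app_le (subW_le_imp a b s) le_rfl).trans (aex_le_imp _ _)) <| le_iInf fun u =>
      lam_le_imp <| app_le (times_le_imp _ _ _) <| lam_le_imp <| lam_le_imp <|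
        app_le (app_le (app_le (memCongr_le_imp _ _ _)
          (le_iInf fun _ => iInf_le_of_le u (eqWTransAt_le _ _ _)))
          (app_le (subW_le_imp b c u) le_rfl)) le_rfl

noncomputable def eqTransStep (IA : ImplicativeAlgebra A) : A :=
  IA.lam fun g => IA.lam fun e₁ => IA.lam fun e₂ =>
    IA.app e₁ <| IA.lam fun ab => IA.lam fun ba =>
    IA.app e₂ <| IA.lam fun bc => IA.lam fun cb =>
      IA.app (IA.app IA.pair (IA.app (IA.app (IA.app IA.subTrans g) ab) bc))
        (IA.app (IA.app (IA.app IA.subTrans g) cb) ba)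

theorem eqTransStep_mem : IA.eqTransStep ∈ IA.Sig :=
  LamTerm.eval_mem
    (t := .lam (.lam (.lam (.app (.var 1) (.lam (.lam (.app (.var 2) (.lam (.lam
      (.app (.app (.const IA.pair)
          (.app (.app (.app (.const IA.subTrans) (.var 6)) (.var 3)) (.var 1)))
        (.app (.app (.app (.const IA.subTrans) (.var 6)) (.var 0)) (.var 2))))))))))))
    (by simpa [LamTerm.WellFormed] using ⟨pair_mem, subTrans_mem⟩)

theorem eqTransStep_le_imp (b : PreW A) :
    IA.eqTransStep ≤ IA.imp (⨅ u, IA.eqWTransAt (b.fam u)) (IA.eqWTransAt b) := by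
  refine lam_le_imp <| le_iInf₂ fun a c => lam_le_imp <| lam_le_imp <| ?_
  have hab := (eqW_eq_times_subW (IA := IA) a b).le.trans (times_le_imp _ _ (IA.eqW a c))
  have hbc := (eqW_eq_times_subW (IA := IA) b c).le.trans (times_le_imp _ _ (IA.eqW a c))
  refine app_le hab <| lam_le_imp <| lam_le_imp <| app_le hbc <| lam_le_imp <| lam_le_imp <| ?_
  exact (app_le (app_le (pair_le_imp _ _)
    (app_le (app_le (app_le (subTrans_le_imp a b c) le_rfl) le_rfl) le_rfl))
    (app_le (app_le (app_le (subTrans_le_imp c b a) le_rfl) le_rfl) le_rfl)).trans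
    (eqW_eq_times_subW a c).ge

noncomputable def turing (IA : ImplicativeAlgebra A) : A :=
  IA.lam fun x => IA.lam fun y => IA.app y (IA.app (IA.app x x) y)

theorem turing_mem : IA.turing ∈ IA.Sig :=
  LamTerm.eval_mem (t := .lam (.lam (.app (.var 0) (.app (.app (.var 1) (.var 1)) (.var 0)))))
    (by simp [LamTerm.WellFormed])

noncomputable def fixpoint (IA : ImplicativeAlgebra A) (f : A) : A :=
  IA.app (IA.app IA.turing IA.turing) f

theorem fixpoint_mem {f : A} (hf : f ∈ IA.Sig) : IA.fixpoint f ∈ IA.Sig :=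
  app_mem (app_mem turing_mem turing_mem) hf

theorem fixpoint_le_app (f : A) : IA.fixpoint f ≤ IA.app f (IA.fixpoint f) :=
  (app_mono (app_lam_le _ _) le_rfl).trans (app_lam_le _ _)

theorem fixpoint_le_of_wellFounded {α : Sort*} {r : α → α → Prop} (hr : WellFounded r)
    {f : A} {P : α → A} (hf : ∀ x g, (∀ y, r y x → g ≤ P y) → IA.app f g ≤ P x)
    (x : α) :
    IA.fixpoint f ≤ P x :=
  hr.induction x fun x ih => (fixpoint_le_app f).trans (hf x _ ih)

noncomputable def eqTrans (IA : ImplicativeAlgebra A) : A :=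
  IA.fixpoint IA.eqTransStep

theorem eqTrans_mem : IA.eqTrans ∈ IA.Sig :=
  fixpoint_mem eqTransStep_mem

theorem eqTrans_le (b : PreW A) : IA.eqTrans ≤ IA.eqWTransAt b :=
  fixpoint_le_of_wellFounded (InvImage.wf PreW.rank wellFounded_lt)
    (fun b _ ih => app_le (eqTransStep_le_imp b) (le_iInf fun u => ih _ (b.rank_fam_lt u))) b

noncomputable def memSubst (IA : ImplicativeAlgebra A) : A :=
  IA.lam fun p => IA.app p <| IA.lam fun e => IA.lam fun m =>
    IA.app (IA.app (IA.app IA.memCongr IA.eqTrans) m) e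

theorem memSubst_mem : IA.memSubst ∈ IA.Sig :=
  LamTerm.eval_mem
    (t := .lam (.app (.var 0) (.lam (.lam
      (.app (.app (.app (.const IA.memCongr) (.const IA.eqTrans)) (.var 0)) (.var 1))))))
    (by simpa [LamTerm.WellFormed] using ⟨memCongr_mem, eqTrans_mem⟩)

theorem memSubst_le_imp (α β γ : PreW A) :
    IA.memSubst ≤ IA.imp (IA.times (IA.eqW α β) (IA.memW α γ)) (IA.memW β γ) :=
  lam_le_imp <| app_le (times_le_imp _ _ _) <| lam_le_imp <| lam_le_imp <|
    app_le (app_le (app_le (memCongr_le_imp α β γ)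
      (le_iInf fun _ => (eqTrans_le α).trans (eqWTransAt_le _ _ _))) le_rfl)
      le_rfl

end ImplicativeAlgebra

theorem stmt4_general {A : Type u} [CompleteLattice A] (IA : ImplicativeAlgebra A)
    (κ : Cardinal.{u}) :
    ∃ s₂ ∈ IA.Sig, s₂ ≤ ⨅ α : WSet A κ, ⨅ β : WSet A κ, ⨅ γ : WSet A κ,
      IA.imp (IA.times (IA.eqW α.1 β.1) (IA.memW α.1 γ.1)) (IA.memW β.1 γ.1) :=
  ⟨IA.memSubst, ImplicativeAlgebra.memSubst_mem,
    le_iInf fun α => le_iInf fun β => le_iInf fun γ =>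
      ImplicativeAlgebra.memSubst_le_imp α.1 β.1 γ.1⟩

theorem stmt4 {A : Type u} [CompleteLattice A] (IA : ImplicativeAlgebra A)
    (κ : Cardinal.{u}) (hκ : κ.IsInaccessible) (hA : Cardinal.mk A < κ) :
    ∃ s₂ ∈ IA.Sig, s₂ ≤ ⨅ α : WSet A κ, ⨅ β : WSet A κ, ⨅ γ : WSet A κ,
      IA.imp (IA.times (IA.eqW α.1 β.1) (IA.memW α.1 γ.1)) (IA.memW β.1 γ.1) :=
  stmt4_general IA κ
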